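/- arXiv:1912.03779 — 2 statements merged into one kernel-verified Lean document; each statement's English description precedes it below -/
import Mathlib

section
/- Let A₀, A₁, A₂, … be nonempty compact subsets of ℝ such that gap(Aᵢ) ≤ diam(A_{i+1}) for every i ∈ ℕ, and assume the infinite Minkowski sum A = Σ_{i∈ℕ} Aᵢ exists as the limit of the partial sums in the Hausdorff metric. Then A is an interval. -/
open Pointwise

/-- The length of the longest bounded interval complementary to `A`:
`gap A = min {ℓ ≥ 0 : A + [0,ℓ] is an interval}`. -/
noncomputable def gap (A : Set ℝ) : ℝ :=
  sInf {ℓ : ℝ | 0 ≤ ℓ ∧ (A + Set.Icc 0 ℓ).OrdConnected}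

/-!
Bridging lemma: if `gap A ≤ diam B`, every gap of `A + B` is at most `gap B`, because
`A + Icc 0 (diam B)` is already an interval and `B` fills each of its translates up to
`gap B`. By induction the partial sums `Sₙ` satisfy `gap Sₙ ≤ gap Aₙ ≤ diam Aₙ₊₁`. Since
`diam Sₙ = ∑_{i ≤ n} diam Aᵢ` stays bounded along a Hausdorff-convergent sequence,
`diam Aₙ → 0`, so `gap Sₙ → 0`. A point between two points of the limit `S` is then within
`2 d_H(Sₙ, S) + gap Sₙ` of `S` for every `n`, hence lies in the closed set `S`.
-/

open Set Metric Filter Topology Bornology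

section GapLemmas

variable {K A B : Set ℝ} {ℓ ℓ' : ℝ}

lemma add_Icc_subset_Icc (hK : BddBelow K) (hK' : BddAbove K) :
    K + Icc 0 ℓ ⊆ Icc (sInf K) (sSup K + ℓ) := by
  rintro _ ⟨k, hk, t, ht, rfl⟩
  exact ⟨by linarith [csInf_le hK hk, ht.1], by linarith [le_csSup hK' hk, ht.2]⟩

lemma ordConnected_add_Icc_iff (hK : IsCompact K) (hKne : K.Nonempty) (hℓ : 0 ≤ ℓ) :
    (K + Icc 0 ℓ).OrdConnected ↔ Icc (sInf K) (sSup K + ℓ) ⊆ K + Icc 0 ℓ := by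
  refine ⟨fun h => h.out ?_ ?_, fun h => ⟨fun x hx z hz => ?_⟩⟩
  · exact ⟨sInf K, hK.sInf_mem hKne, 0, ⟨le_rfl, hℓ⟩, add_zero _⟩
  · exact ⟨sSup K, hK.sSup_mem hKne, ℓ, ⟨hℓ, le_rfl⟩, rfl⟩
  · have hx' := add_Icc_subset_Icc hK.bddBelow hK.bddAbove hx
    have hz' := add_Icc_subset_Icc hK.bddBelow hK.bddAbove hz
    exact (Icc_subset_Icc hx'.1 hz'.2).trans h

lemma ordConnected_add_Icc_of_le (hK : IsCompact K) (hKne : K.Nonempty) (hℓ : 0 ≤ ℓ)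
    (h : (K + Icc 0 ℓ).OrdConnected) (hℓℓ' : ℓ ≤ ℓ') : (K + Icc 0 ℓ').OrdConnected := by
  rw [ordConnected_add_Icc_iff hK hKne hℓ] at h
  refine (ordConnected_add_Icc_iff hK hKne (hℓ.trans hℓℓ')).2 fun y hy => ?_
  rcases le_total y (sSup K + ℓ) with hyℓ | hyℓ
  · exact add_subset_add_left (Icc_subset_Icc_right hℓℓ') (h ⟨hy.1, hyℓ⟩)
  · exact ⟨sSup K, hK.sSup_mem hKne, y - sSup K, ⟨by linarith, by linarith [hy.2]⟩, by ring⟩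

lemma ordConnected_add_Icc_diam (hK : IsCompact K) (hKne : K.Nonempty) :
    (K + Icc 0 (diam K)).OrdConnected := by
  rw [ordConnected_add_Icc_iff hK hKne diam_nonneg, Real.diam_eq hK.isBounded]
  intro y hy
  rcases le_total y (sSup K) with hyK | hyK
  · exact ⟨sInf K, hK.sInf_mem hKne, y - sInf K, ⟨by linarith [hy.1], by linarith⟩, by ring⟩
  · exact ⟨sSup K, hK.sSup_mem hKne, y - sSup K, ⟨by linarith, by linarith [hy.2]⟩, by ring⟩

lemma gap_nonneg (K : Set ℝ) : 0 ≤ gap K :=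
  Real.sInf_nonneg fun _ h => h.1

lemma gap_le (hℓ : 0 ≤ ℓ) (h : (K + Icc 0 ℓ).OrdConnected) : gap K ≤ ℓ :=
  csInf_le ⟨0, fun _ h => h.1⟩ ⟨hℓ, h⟩

lemma ordConnected_add_Icc_gap (hK : IsCompact K) (hKne : K.Nonempty) :
    (K + Icc 0 (gap K)).OrdConnected := by
  refine (ordConnected_add_Icc_iff hK hKne (gap_nonneg K)).2 fun y hy => ?_
  have hT : IsCompact (K ∩ Iic y) := hK.inter_right isClosed_Iic
  obtain ⟨hα, hαy⟩ : sSup (K ∩ Iic y) ∈ K ∩ Iic y :=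
    hT.sSup_mem ⟨sInf K, hK.sInf_mem hKne, hy.1⟩
  -- `y` lies in `K + Icc 0 ℓ` for every admissible `ℓ`, so its distance down to `K` is `≤ ℓ`
  have hgap : y - sSup (K ∩ Iic y) ≤ gap K := by
    refine le_csInf ⟨diam K, diam_nonneg, ordConnected_add_Icc_diam hK hKne⟩ ?_
    rintro ℓ ⟨hℓ, h⟩
    have hyℓ : y ≤ sSup K + ℓ := hy.2.trans (by linarith [gap_le hℓ h])
    obtain ⟨β, hβ, t, ht, rfl⟩ := (ordConnected_add_Icc_iff hK hKne hℓ).1 h ⟨hy.1, hyℓ⟩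
    have hβ' : β ≤ sSup (K ∩ Iic (β + t)) :=
      le_csSup hT.bddAbove ⟨hβ, by simp only [mem_Iic]; linarith [ht.1]⟩
    linarith [ht.2]
  exact ⟨_, hα, y - sSup (K ∩ Iic y), ⟨sub_nonneg.2 hαy, hgap⟩, by ring⟩

lemma ordConnected_add_add_Icc (hA : IsCompact A) (hAne : A.Nonempty) (hB : IsCompact B)
    (hBne : B.Nonempty) (hAB : gap A ≤ diam B) (hℓ : 0 ≤ ℓ) (h : (B + Icc 0 ℓ).OrdConnected) :
    (A + B + Icc 0 ℓ).OrdConnected := by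
  rw [Real.diam_eq hB.isBounded] at hAB
  rw [ordConnected_add_Icc_iff (hA.add hB) (hAne.add hBne) hℓ,
    csInf_add hAne hA.bddBelow hBne hB.bddBelow, csSup_add hAne hA.bddAbove hBne hB.bddAbove]
  intro y hy
  have hA' : (A + Icc 0 (sSup B - sInf B + ℓ)).OrdConnected :=
    ordConnected_add_Icc_of_le hA hAne (gap_nonneg A) (ordConnected_add_Icc_gap hA hAne)
      (by linarith)
  obtain ⟨α, hα, t, ht, hαt⟩ := (ordConnected_add_Icc_iff hA hAne (by linarith [gap_nonneg A])).1 hA'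
    (show y - sInf B ∈ _ from ⟨by linarith [hy.1], by linarith [hy.2]⟩)
  obtain ⟨β, hβ, s, hs, hβs⟩ := (ordConnected_add_Icc_iff hB hBne hℓ).1 h
    (show y - α ∈ _ from ⟨by linarith [ht.1], by linarith [ht.2]⟩)
  exact ⟨α + β, add_mem_add hα hβ, s, hs, by linarith⟩

lemma gap_add_le (hA : IsCompact A) (hAne : A.Nonempty) (hB : IsCompact B) (hBne : B.Nonempty)
    (hAB : gap A ≤ diam B) : gap (A + B) ≤ gap B :=
  gap_le (gap_nonneg B)
    (ordConnected_add_add_Icc hA hAne hB hBne hAB (gap_nonneg B) (ordConnected_add_Icc_gap hB hBne))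

lemma infDist_le_gap (hK : IsCompact K) (hKne : K.Nonempty) {y : ℝ}
    (hy : y ∈ Icc (sInf K) (sSup K + gap K)) : infDist y K ≤ gap K := by
  obtain ⟨k, hk, t, ht, rfl⟩ :=
    (ordConnected_add_Icc_iff hK hKne (gap_nonneg K)).1 (ordConnected_add_Icc_gap hK hKne) hy
  calc infDist (k + t) K ≤ dist (k + t) k := infDist_le_dist_of_mem hk
    _ = t := by rw [Real.dist_eq, add_sub_cancel_left, abs_of_nonneg ht.1]
    _ ≤ gap K := ht.2

lemma infDist_le_max_add_gap (hK : IsCompact K) (hKne : K.Nonempty) {x y z : ℝ}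
    (hxy : x ≤ y) (hyz : y ≤ z) :
    infDist y K ≤ max (infDist x K) (infDist z K) + gap K := by
  have hmax := le_max_left (infDist x K) (infDist z K)
  have hmax' := le_max_right (infDist x K) (infDist z K)
  rcases lt_or_ge y (sInf K) with hy | hy
  · have hx : sInf K - x ≤ infDist x K := (le_infDist hKne).2 fun k hk => by
      rw [Real.dist_eq, abs_sub_comm]
      linarith [le_abs_self (k - x), csInf_le hK.bddBelow hk]
    have := infDist_le_dist_of_mem (x := y) (hK.sInf_mem hKne)
    rw [Real.dist_eq, abs_of_neg (by linarith)] at this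
    linarith [gap_nonneg K]
  rcases le_or_gt y (sSup K) with hy' | hy'
  · linarith [infDist_le_gap hK hKne ⟨hy, hy'.trans (le_add_of_nonneg_right (gap_nonneg K))⟩,
      infDist_nonneg (x := x) (s := K)]
  · have hz : z - sSup K ≤ infDist z K := (le_infDist hKne).2 fun k hk => by
      rw [Real.dist_eq]
      linarith [le_abs_self (z - k), le_csSup hK.bddAbove hk]
    have := infDist_le_dist_of_mem (x := y) (hK.sSup_mem hKne)
    rw [Real.dist_eq, abs_of_pos (by linarith)] at this
    linarith [gap_nonneg K]

end GapLemmas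

theorem ordConnected_of_tendsto_hausdorffDist {ι : Type*} {l : Filter ι} [l.NeBot]
    {K : ι → Set ℝ} {S : Set ℝ} (hK : ∀ i, IsCompact (K i)) (hKne : ∀ i, (K i).Nonempty)
    (hS : IsCompact S) (hdist : Tendsto (fun i => hausdorffDist (K i) S) l (𝓝 0))
    (hgap : Tendsto (fun i => gap (K i)) l (𝓝 0)) : S.OrdConnected := by
  refine ⟨fun x hx z hz y hy => ?_⟩
  have hfin : ∀ i, hausdorffEDist (K i) S ≠ ⊤ := fun i =>
    hausdorffEDist_ne_top_of_nonempty_of_bounded (hKne i) ⟨x, hx⟩ (hK i).isBounded hS.isBounded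
  have hnear : ∀ w ∈ S, ∀ i, infDist w (K i) ≤ hausdorffDist (K i) S := fun w hw i => by
    rw [hausdorffDist_comm]
    exact infDist_le_hausdorffDist_of_mem hw (by rw [hausdorffEDist_comm]; exact hfin i)
  have hbound : ∀ i, infDist y S ≤ 2 * hausdorffDist (K i) S + gap (K i) := fun i =>
    calc infDist y S ≤ infDist y (K i) + hausdorffDist (K i) S :=
          infDist_le_infDist_add_hausdorffDist (hfin i)
      _ ≤ max (infDist x (K i)) (infDist z (K i)) + gap (K i) + hausdorffDist (K i) S := by
          gcongr
          exact infDist_le_max_add_gap (hK i) (hKne i) hy.1 hy.2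
      _ ≤ 2 * hausdorffDist (K i) S + gap (K i) := by
          linarith [max_le (hnear x hx i) (hnear z hz i)]
  have hzero : infDist y S ≤ 0 :=
    ge_of_tendsto' (by simpa using (hdist.const_mul 2).add hgap) hbound
  exact (hS.isClosed.mem_iff_infDist_zero ⟨x, hx⟩).2 (le_antisymm hzero infDist_nonneg)

lemma diam_le_diam_add_two_mul_hausdorffDist {α : Type*} [PseudoMetricSpace α] {K S : Set α}
    (hK : IsBounded K) (hS : IsCompact S) (hSne : S.Nonempty) :
    diam K ≤ diam S + 2 * hausdorffDist K S := by
  have hnear : ∀ a ∈ K, ∃ a' ∈ S, dist a a' ≤ hausdorffDist K S := fun a ha => by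
    obtain ⟨a', ha', hdist⟩ := hS.exists_infDist_eq_dist hSne a
    exact ⟨a', ha', hdist ▸ infDist_le_hausdorffDist_of_mem ha
      (hausdorffEDist_ne_top_of_nonempty_of_bounded ⟨a, ha⟩ hSne hK hS.isBounded)⟩
  refine diam_le_of_forall_dist_le
    (add_nonneg diam_nonneg (mul_nonneg zero_le_two hausdorffDist_nonneg)) fun a ha b hb => ?_
  obtain ⟨a', ha', hda⟩ := hnear a ha
  obtain ⟨b', hb', hdb⟩ := hnear b hb
  calc dist a b ≤ dist a a' + dist a' b' + dist b' b := dist_triangle4 a a' b' b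
    _ ≤ hausdorffDist K S + diam S + hausdorffDist K S := by
        gcongr
        · exact dist_le_diam_of_mem hS.isBounded ha' hb'
        · rwa [dist_comm]
    _ = diam S + 2 * hausdorffDist K S := by ring

lemma diam_add_of_isCompact {A B : Set ℝ} (hA : IsCompact A) (hAne : A.Nonempty)
    (hB : IsCompact B) (hBne : B.Nonempty) : diam (A + B) = diam A + diam B := by
  rw [Real.diam_eq (hA.add hB).isBounded, Real.diam_eq hA.isBounded, Real.diam_eq hB.isBounded,
    csInf_add hAne hA.bddBelow hBne hB.bddBelow, csSup_add hAne hA.bddAbove hBne hB.bddAbove]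
  ring

section FinsetSum

variable {ι M : Type*} [AddCommMonoid M]

lemma isCompact_finset_sum [TopologicalSpace M] [ContinuousAdd M] {A : ι → Set M} (s : Finset ι) (h : ∀ i ∈ s, IsCompact (A i)) :
    IsCompact (∑ i ∈ s, A i) := by
  induction s using Finset.cons_induction with
  | empty => simp
  | cons a s ha ih =>
    rw [Finset.sum_cons]
    exact (h a (Finset.mem_cons_self a s)).add (ih fun i hi => h i (Finset.mem_cons_of_mem hi))

lemma nonempty_finset_sum {A : ι → Set M} (s : Finset ι) (h : ∀ i ∈ s, (A i).Nonempty) :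
    (∑ i ∈ s, A i).Nonempty := by
  classical
  exact ⟨_, finsetSum_mem_finsetSum s A (fun i => if hi : i ∈ s then (h i hi).some else 0)
    fun i hi => by simpa [hi] using (h i hi).some_mem⟩

lemma diam_finset_sum {A : ι → Set ℝ} (s : Finset ι) (hA : ∀ i ∈ s, IsCompact (A i))
    (hAne : ∀ i ∈ s, (A i).Nonempty) : diam (∑ i ∈ s, A i) = ∑ i ∈ s, diam (A i) := by
  induction s using Finset.cons_induction with
  | empty => simp
  | cons a s ha ih =>
    have hA' : ∀ i ∈ s, IsCompact (A i) := fun i hi => hA i (Finset.mem_cons_of_mem hi)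
    have hAne' : ∀ i ∈ s, (A i).Nonempty := fun i hi => hAne i (Finset.mem_cons_of_mem hi)
    rw [Finset.sum_cons, Finset.sum_cons, diam_add_of_isCompact (hA a (Finset.mem_cons_self a s))
      (hAne a (Finset.mem_cons_self a s)) (isCompact_finset_sum s hA')
      (nonempty_finset_sum s hAne'), ih hA' hAne']

end FinsetSum

lemma gap_sum_range_succ_le {A : ℕ → Set ℝ} (hA : ∀ i, IsCompact (A i))
    (hAne : ∀ i, (A i).Nonempty) (hgap : ∀ i, gap (A i) ≤ diam (A (i + 1))) (n : ℕ) :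
    gap (∑ i ∈ Finset.range (n + 1), A i) ≤ gap (A n) := by
  induction n with
  | zero => simp
  | succ n ih =>
    rw [Finset.sum_range_succ]
    exact gap_add_le (isCompact_finset_sum _ fun i _ => hA i)
      (nonempty_finset_sum _ fun i _ => hAne i) (hA _) (hAne _) (ih.trans (hgap n))

theorem interval_of_minkowski_tsum (A : ℕ → Set ℝ)
    (hcomp : ∀ i, IsCompact (A i)) (hne : ∀ i, (A i).Nonempty)
    (hgap : ∀ i, gap (A i) ≤ Metric.diam (A (i + 1)))
    (S : Set ℝ) (hS : IsCompact S) (hSne : S.Nonempty)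
    (hlim : Filter.Tendsto
      (fun n => Metric.hausdorffDist (∑ i ∈ Finset.range (n + 1), A i) S)
      Filter.atTop (nhds 0)) :
    S.OrdConnected := by
  have hPcomp (n : ℕ) : IsCompact (∑ i ∈ Finset.range (n + 1), A i) :=
    isCompact_finset_sum _ fun i _ => hcomp i
  have hPne (n : ℕ) : (∑ i ∈ Finset.range (n + 1), A i).Nonempty :=
    nonempty_finset_sum _ fun i _ => hne i
  obtain ⟨C, hC⟩ := hlim.bddAbove_range
  have hsum : Summable fun i => diam (A i) :=
    summable_of_sum_range_le (fun _ => diam_nonneg) fun n =>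
      calc ∑ i ∈ Finset.range n, diam (A i) ≤ ∑ i ∈ Finset.range (n + 1), diam (A i) := by
            rw [Finset.sum_range_succ]; exact le_add_of_nonneg_right diam_nonneg
        _ = diam (∑ i ∈ Finset.range (n + 1), A i) :=
            (diam_finset_sum _ (fun i _ => hcomp i) fun i _ => hne i).symm
        _ ≤ diam S + 2 * C := by
            grw [diam_le_diam_add_two_mul_hausdorffDist (hPcomp n).isBounded hS hSne,
              show hausdorffDist _ S ≤ C from hC ⟨n, rfl⟩]
  have hgap_lim : Tendsto (fun n => gap (∑ i ∈ Finset.range (n + 1), A i)) atTop (𝓝 0) :=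
    squeeze_zero (fun n => gap_nonneg _)
      (fun n => (gap_sum_range_succ_le hcomp hne hgap n).trans (hgap n))
      (hsum.tendsto_atTop_zero.comp (tendsto_add_atTop_nat 1))
  exact ordConnected_of_tendsto_hausdorffDist hPcomp hPne hS hlim hgap_lim
end

section
/- Let f(x) = Σ_{i≥0} aᵢxⁱ be a power series with Σᵢ|aᵢ| < ∞ and suppose there exists ε > 0 such that |a_{i+1}|/|aᵢ| > ε for all but finitely many i ∈ ℕ. Then the set of nonempty compact sets K ⊆ [0,1] for which f(K) = Σ_{i≥0} aᵢ·K^{⊙i} has empty interior is meager in 𝒦([0,1]). -/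
open Pointwise

/-- The space of nonempty compact subsets of `[0,1]`, with the Hausdorff metric topology. -/
def KIcc : Type := {K : TopologicalSpace.NonemptyCompacts ℝ // (K : Set ℝ) ⊆ Set.Icc 0 1}

instance : TopologicalSpace KIcc := instTopologicalSpaceSubtype

/-!
Call `K` good if it is `ρ`-dense in an interval `[p, q]` with `2ρ` small compared to `ε q (q - p)`;
good sets form an open dense subset of `𝒦([0,1])`. For good `K` one may take `p, q ∈ K`. The copies
`λₙ K ⊆ aₙ K^n`, `λₙ = aₙ q^(n-1)`, span intervals of width `|λₙ| (q - p)` in which their gaps are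
at most `2 |λₙ| ρ`, and for large `n` the ratio condition makes each gap smaller than the width of
the next copy. Fixing finitely many terms and choosing the others greedily then writes every point
of a nondegenerate interval as a sum `∑ xₙ` with `xₙ ∈ aₙ K^n`, and these sums lie in `f(K)`.
-/

open Set Metric Filter Topology TopologicalSpace

section SeriesSums

variable {E : Type*} [AddCommMonoid E] [TopologicalSpace E]

def seriesSums (A : ℕ → Set E) : Set E :=
  {t | ∃ x : ℕ → E, (∀ n, x n ∈ A n) ∧
    Tendsto (fun n => ∑ i ∈ Finset.range n, x i) atTop (𝓝 t)}

lemma seriesSums_mono {A B : ℕ → Set E} (h : ∀ n, A n ⊆ B n) :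
    seriesSums A ⊆ seriesSums B :=
  fun _ ⟨x, hx, hlim⟩ => ⟨x, fun n => h n (hx n), hlim⟩

lemma sum_range_add_mem_seriesSums [ContinuousAdd E] {A : ℕ → Set E} {c : ℕ → E}
    (hc : ∀ n, c n ∈ A n) (N : ℕ) {t : E} (ht : t ∈ seriesSums fun n => A (n + N)) :
    ∑ i ∈ Finset.range N, c i + t ∈ seriesSums A := by
  classical
  obtain ⟨y, hy, hlim⟩ := ht
  refine ⟨fun n => if n < N then c n else y (n - N), fun n => ?_, ?_⟩
  · dsimp only
    split_ifs with hn
    · exact hc n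
    · simpa [Nat.sub_add_cancel (not_lt.1 hn)] using hy (n - N)
  · rw [← tendsto_add_atTop_iff_nat N]
    have hsplit : ∀ n, ∑ i ∈ Finset.range (n + N), (if i < N then c i else y (i - N)) =
        ∑ i ∈ Finset.range N, c i + ∑ j ∈ Finset.range n, y j := by
      intro n
      rw [add_comm n N, Finset.sum_range_add]
      congr 1
      · exact Finset.sum_congr rfl fun i hi => if_pos (Finset.mem_range.1 hi)
      · simp
    simpa only [hsplit] using tendsto_const_nhds.add hlim

end SeriesSums

lemma mem_of_tendsto_hausdorffDist {α : Type*} [PseudoMetricSpace α] {S : ℕ → Set α}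
    {F : Set α} {x : ℕ → α} {t : α} (hF : IsClosed F) (hfin : ∀ n, hausdorffEDist (S n) F ≠ ⊤)
    (hlim : Tendsto (fun n => hausdorffDist (S n) F) atTop (𝓝 0)) (hx : ∀ n, x n ∈ S n)
    (ht : Tendsto x atTop (𝓝 t)) : t ∈ F := by
  have hFne : F.Nonempty := nonempty_of_hausdorffEDist_ne_top ⟨_, hx 0⟩ (hfin 0)
  rw [hF.mem_iff_infDist_zero hFne]
  have hdist : Tendsto (fun n => infDist (x n) F) atTop (𝓝 (infDist t F)) :=
    ((continuous_infDist_pt F).tendsto t).comp ht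
  exact le_antisymm (le_of_tendsto_of_tendsto' hdist hlim fun n =>
    infDist_le_hausdorffDist_of_mem (hx n) (hfin n)) infDist_nonneg

lemma seriesSums_subset_of_tendsto_hausdorffDist {E : Type*} [SeminormedAddCommGroup E]
    {A : ℕ → Set E} {F : Set E} (hF : IsClosed F)
    (hfin : ∀ n, hausdorffEDist (∑ i ∈ Finset.range n, A i) F ≠ ⊤)
    (hlim : Tendsto (fun n => hausdorffDist (∑ i ∈ Finset.range n, A i) F) atTop (𝓝 0)) :
    seriesSums A ⊆ F :=
  fun _ ⟨_, hx, ht⟩ => mem_of_tendsto_hausdorffDist hF hfin hlim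
    (fun _ => Set.finsetSum_mem_finsetSum _ _ _ fun i _ => hx i) ht

lemma exists_mem_Icc_of_forall_dist_le {A : Set ℝ} {σ τ ρ α β : ℝ} (hσ : σ ∈ A) (hτ : τ ∈ A)
    (hA : ∀ y ∈ Icc σ τ, ∃ x ∈ A, dist y x ≤ ρ) (hατ : α ≤ τ) (hσβ : σ ≤ β)
    (hρ : 2 * ρ ≤ β - α) : ∃ x ∈ A, x ∈ Icc α β := by
  by_cases hτβ : τ ≤ β
  · exact ⟨τ, hτ, hατ, hτβ⟩
  by_cases hασ : α ≤ σ
  · exact ⟨σ, hσ, hασ, hσβ⟩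
  push Not at hτβ hασ
  obtain ⟨x, hxA, hx⟩ := hA ((α + β) / 2) ⟨by linarith, by linarith⟩
  rw [Real.dist_eq, abs_le] at hx
  exact ⟨x, hxA, by linarith, by linarith⟩

lemma tendsto_tsum_sub_sum_range {f : ℕ → ℝ} (hf : Summable f) :
    Tendsto (fun n => ∑' i, f i - ∑ i ∈ Finset.range n, f i) atTop (𝓝 0) := by
  simpa using (tendsto_const_nhds (x := ∑' i, f i)).sub hf.hasSum.tendsto_sum_nat

lemma exists_seq_forall_sub_sum_mem {E : Type*} [AddCommGroup E] {A I : ℕ → Set E} {t : E}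
    (ht : t ∈ I 0) (step : ∀ n, ∀ r ∈ I n, ∃ x ∈ A n, r - x ∈ I (n + 1)) :
    ∃ x : ℕ → E, (∀ n, x n ∈ A n) ∧ ∀ n, t - ∑ i ∈ Finset.range n, x i ∈ I n := by
  choose! next hnextA hnext using step
  let R : ℕ → E := fun n => Nat.rec t (fun k r => r - next k r) n
  have hR : ∀ n, R n ∈ I n := by
    intro n
    induction n with
    | zero => exact ht
    | succ n ih => exact hnext n _ ih
  refine ⟨fun n => next n (R n), fun n => hnextA n _ (hR n), fun n => ?_⟩
  suffices t - ∑ i ∈ Finset.range n, next i (R i) = R n from this ▸ hR n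
  induction n with
  | zero => simp [R]
  | succ n ih => rw [Finset.sum_range_succ, ← sub_sub, ih]

lemma Icc_tsum_subset_seriesSums {A : ℕ → Set ℝ} {σ τ ρ : ℕ → ℝ} (hσA : ∀ n, σ n ∈ A n)
    (hτA : ∀ n, τ n ∈ A n) (hστ : ∀ n, σ n ≤ τ n) (hσ : Summable σ) (hτ : Summable τ)
    (hA : ∀ n, ∀ y ∈ Icc (σ n) (τ n), ∃ x ∈ A n, dist y x ≤ ρ n)
    (hρ : ∀ n, 2 * ρ n ≤ τ (n + 1) - σ (n + 1)) :
    Icc (∑' n, σ n) (∑' n, τ n) ⊆ seriesSums A := by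
  intro t ht
  set lo : ℕ → ℝ := fun n => ∑' i, σ i - ∑ i ∈ Finset.range n, σ i
  set hi : ℕ → ℝ := fun n => ∑' i, τ i - ∑ i ∈ Finset.range n, τ i
  have hlo : ∀ n, lo n = lo (n + 1) + σ n := fun n => by simp [lo, Finset.sum_range_succ]; ring
  have hhi : ∀ n, hi n = hi (n + 1) + τ n := fun n => by simp [hi, Finset.sum_range_succ]; ring
  have hgap : ∀ n, τ (n + 1) - σ (n + 1) ≤ hi (n + 1) - lo (n + 1) := by
    intro n
    have := (hτ.sub hσ).sum_le_tsum (Finset.range (n + 2)) (fun i _ => sub_nonneg.2 (hστ i))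
    simp only [lo, hi, Finset.sum_range_succ, Finset.sum_sub_distrib, hτ.tsum_sub hσ] at this ⊢
    linarith
  have hlim_lo : Tendsto lo atTop (𝓝 0) := tendsto_tsum_sub_sum_range hσ
  have hlim_hi : Tendsto hi atTop (𝓝 0) := tendsto_tsum_sub_sum_range hτ
  have ht₀ : t ∈ Icc (lo 0) (hi 0) := by simpa [lo, hi] using ht
  clear_value lo hi
  have step : ∀ n, ∀ r ∈ Icc (lo n) (hi n), ∃ x ∈ A n, r - x ∈ Icc (lo (n + 1)) (hi (n + 1)) := by
    intro n r ⟨hr₁, hr₂⟩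
    obtain ⟨x, hxA, hx₁, hx₂⟩ := exists_mem_Icc_of_forall_dist_le (hσA n) (hτA n) (hA n)
      (α := r - hi (n + 1)) (β := r - lo (n + 1)) (by linarith [hhi n]) (by linarith [hlo n])
      (by linarith [hρ n, hgap n])
    exact ⟨x, hxA, by linarith, by linarith⟩
  obtain ⟨x, hxA, hx⟩ := exists_seq_forall_sub_sum_mem ht₀ step
  have hrem : Tendsto (fun n => t - ∑ i ∈ Finset.range n, x i) atTop (𝓝 0) :=
    tendsto_of_tendsto_of_tendsto_of_le_of_le hlim_lo hlim_hi (fun n => (hx n).1)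
      (fun n => (hx n).2)
  exact ⟨x, hxA, by simpa using (tendsto_const_nhds (x := t)).sub hrem⟩

lemma exists_Icc_subset_seriesSums_smul {K : Set ℝ} {p q ρ : ℝ} {c : ℕ → ℝ} (hp : p ∈ K)
    (hq : q ∈ K) (hpq : p < q) (hK : ∀ y ∈ Icc p q, ∃ k ∈ K, dist y k ≤ ρ) (hc : Summable c)
    (hc₀ : c 0 ≠ 0) (hcρ : ∀ n, 2 * (|c n| * ρ) ≤ |c (n + 1)| * (q - p)) :
    ∃ lo hi, lo < hi ∧ Icc lo hi ⊆ seriesSums fun n => c n • K := by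
  set σ : ℕ → ℝ := fun n => min (c n * p) (c n * q)
  set τ : ℕ → ℝ := fun n => max (c n * p) (c n * q)
  have hwidth : ∀ n, τ n - σ n = |c n| * (q - p) := fun n => by
    rw [max_sub_min_eq_abs, ← mul_sub, abs_mul, abs_of_pos (sub_pos.2 hpq)]
  have hbound : Summable fun n => |c n| * (|p| + |q|) := hc.abs.mul_right _
  have hσ : Summable σ := hbound.of_norm_bounded fun n => by
    rw [Real.norm_eq_abs, mul_add, ← abs_mul, ← abs_mul]
    exact abs_min_le_max_abs_abs.trans (max_le_add_of_nonneg (abs_nonneg _) (abs_nonneg _))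
  have hτ : Summable τ := hbound.of_norm_bounded fun n => by
    rw [Real.norm_eq_abs, mul_add, ← abs_mul, ← abs_mul]
    exact abs_max_le_max_abs_abs.trans (max_le_add_of_nonneg (abs_nonneg _) (abs_nonneg _))
  have hσA : ∀ n, σ n ∈ c n • K := fun n => by
    rcases min_choice (c n * p) (c n * q) with h | h <;> simp only [σ, h]
    exacts [smul_mem_smul_set hp, smul_mem_smul_set hq]
  have hτA : ∀ n, τ n ∈ c n • K := fun n => by
    rcases max_choice (c n * p) (c n * q) with h | h <;> simp only [τ, h]
    exacts [smul_mem_smul_set hp, smul_mem_smul_set hq]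
  have hdense : ∀ n, ∀ y ∈ Icc (σ n) (τ n), ∃ x ∈ c n • K, dist y x ≤ |c n| * ρ := by
    intro n y hy
    rw [← uIcc, ← image_const_mul_uIcc, uIcc_of_le hpq.le] at hy
    obtain ⟨z, hz, rfl⟩ := hy
    obtain ⟨k, hk, hzk⟩ := hK z hz
    refine ⟨c n * k, smul_mem_smul_set hk, ?_⟩
    rw [Real.dist_eq, ← mul_sub, abs_mul, ← Real.dist_eq]
    exact mul_le_mul_of_nonneg_left hzk (abs_nonneg _)
  refine ⟨_, _, ?_, Icc_tsum_subset_seriesSums hσA hτA (fun n => min_le_max) hσ hτ hdense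
    fun n => by rw [hwidth]; exact hcρ n⟩
  refine hσ.tsum_lt_tsum (i := 0) (fun n => min_le_max) ?_ hτ
  have := hwidth 0
  have : 0 < |c 0| * (q - p) := mul_pos (abs_pos.2 hc₀) (sub_pos.2 hpq)
  linarith

lemma abs_pos_and_mul_abs_le_of_lt_div {ε x y : ℝ} (hε : 0 < ε) (h : ε < |y| / |x|) :
    0 < |x| ∧ ε * |x| ≤ |y| := by
  have hx : 0 < |x| := (abs_nonneg x).lt_of_ne fun hx => by
    rw [← hx, div_zero] at h
    linarith
  exact ⟨hx, ((lt_div_iff₀ hx).1 h).le⟩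

lemma two_mul_abs_mul_pow_mul_le {ε ρ p q x y : ℝ} (k : ℕ) (hq : 0 ≤ q) (hpq : p ≤ q)
    (hxy : ε * |x| ≤ |y|) (hρ : 2 * ρ ≤ ε * q * (q - p)) :
    2 * (|x| * q ^ k * ρ) ≤ |y| * q ^ (k + 1) * (q - p) :=
  calc 2 * (|x| * q ^ k * ρ) ≤ |x| * q ^ k * (ε * q * (q - p)) := by
        nlinarith [mul_nonneg (abs_nonneg x) (pow_nonneg hq k)]
    _ = ε * |x| * q ^ (k + 1) * (q - p) := by ring
    _ ≤ |y| * q ^ (k + 1) * (q - p) := by gcongr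

lemma exists_Icc_subset_seriesSums_smul_pow {a : ℕ → ℝ} (hsum : Summable fun i => |a i|)
    {ε : ℝ} {M : ℕ} (hgrow : ∀ n ≥ M, 0 < |a n| ∧ ε * |a n| ≤ |a (n + 1)|) {K : Set ℝ}
    (hK : K ⊆ Icc 0 1) {p q ρ : ℝ} (hp : p ∈ K) (hq : q ∈ K) (hpq : p < q)
    (hKρ : ∀ y ∈ Icc p q, ∃ k ∈ K, dist y k ≤ ρ) (hρ : 2 * ρ ≤ ε * q * (q - p)) :
    ∃ lo hi, lo < hi ∧ Icc lo hi ⊆ seriesSums fun i => a i • K ^ i := by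
  have hq₀ : 0 < q := (hK hp).1.trans_lt hpq
  have hq₁ : q ≤ 1 := (hK hq).2
  set c : ℕ → ℝ := fun j => a (j + (M + 1)) * q ^ (j + M)
  have habs : ∀ j, |c j| = |a (j + (M + 1))| * q ^ (j + M) := fun j => by
    rw [abs_mul, abs_pow, abs_of_pos hq₀]
  have hc : Summable c := ((summable_nat_add_iff (M + 1)).2 hsum).of_norm_bounded fun j => by
    rw [Real.norm_eq_abs, habs]
    exact mul_le_of_le_one_right (abs_nonneg _) (pow_le_one₀ hq₀.le hq₁)
  have hc₀ : c 0 ≠ 0 := mul_ne_zero (abs_pos.1 (hgrow _ (by omega)).1) (pow_pos hq₀ _).ne'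
  have hcρ : ∀ j, 2 * (|c j| * ρ) ≤ |c (j + 1)| * (q - p) := fun j => by
    rw [habs, habs, show j + 1 + (M + 1) = j + (M + 1) + 1 by omega,
      show j + 1 + M = j + M + 1 by omega]
    exact two_mul_abs_mul_pow_mul_le (j + M) hq₀.le hpq.le (hgrow _ (by omega)).2 hρ
  obtain ⟨lo, hi, hlt, hsub⟩ := exists_Icc_subset_seriesSums_smul hp hq hpq hKρ hc hc₀ hcρ
  set s := ∑ i ∈ Finset.range (M + 1), a i * q ^ i
  refine ⟨s + lo, s + hi, by linarith, fun t ht => ?_⟩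
  have hcK : ∀ j, c j • K ⊆ a (j + (M + 1)) • K ^ (j + (M + 1)) := by
    rintro j _ ⟨k, hk, rfl⟩
    refine ⟨q ^ (j + M) * k, mul_mem_mul (pow_mem_pow hq) hk, ?_⟩
    simp only [c, smul_eq_mul]
    ring
  have hmem := seriesSums_mono hcK (hsub (show t - s ∈ Icc lo hi from
    ⟨by linarith [ht.1], by linarith [ht.2]⟩))
  simpa [s] using sum_range_add_mem_seriesSums (A := fun i => a i • K ^ i)
    (c := fun i => a i * q ^ i)
    (fun i => smul_mem_smul_set (pow_mem_pow hq)) (M + 1) hmem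

lemma exists_mem_Icc_subset_thickening {K : Set ℝ} {p q ρ : ℝ} (hpq : p ≤ q)
    (h : Icc p q ⊆ thickening ρ K) :
    ∃ p' ∈ K, ∃ q' ∈ K, p' < p + ρ ∧ q - ρ < q' ∧ Icc p' q' ⊆ thickening ρ K := by
  obtain ⟨p', hp', hpp'⟩ := mem_thickening_iff.1 (h (left_mem_Icc.2 hpq))
  obtain ⟨q', hq', hqq'⟩ := mem_thickening_iff.1 (h (right_mem_Icc.2 hpq))
  rw [Real.dist_eq, abs_lt] at hpp' hqq'
  refine ⟨p', hp', q', hq', by linarith, by linarith, fun y ⟨hy₁, hy₂⟩ => ?_⟩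
  rcases lt_or_ge y p with hyp | hpy
  · exact mem_thickening_iff.2 ⟨p', hp', by rw [Real.dist_eq, abs_lt]; constructor <;> linarith⟩
  rcases le_or_gt y q with hyq | hqy
  · exact h ⟨hpy, hyq⟩
  · exact mem_thickening_iff.2 ⟨q', hq', by rw [Real.dist_eq, abs_lt]; constructor <;> linarith⟩

/-- The inequality is `2ρ ≤ ε q (q - p)` made robust: it survives moving `p` and `q` by less
than `ρ` to points of `K`, while the condition as a whole is open in `K`. -/
def HasDenseInterval (ε : ℝ) (K : Set ℝ) : Prop :=
  ∃ p q ρ : ℝ, 0 < ρ ∧ 2 * ρ < q - p ∧ 2 * ρ ≤ ε * (q - ρ) * (q - p - 2 * ρ) ∧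
    Icc p q ⊆ thickening ρ K

lemma isOpen_setOf_subset_thickening {α : Type*} [MetricSpace α] {C : Set α} (hC : IsCompact C)
    (ρ : ℝ) : IsOpen {K : NonemptyCompacts α | C ⊆ thickening ρ K} := by
  rw [Metric.isOpen_iff]
  intro K hK
  rcases C.eq_empty_or_nonempty with rfl | hCne
  · exact ⟨1, one_pos, fun _ _ => empty_subset _⟩
  obtain ⟨y₀, hy₀, hmax⟩ := hC.exists_isMaxOn hCne (continuous_infDist_pt (K : Set α)).continuousOn
  have hy₀K : infDist y₀ K < ρ := (mem_thickening_iff_infDist_lt K.nonempty).1 (hK hy₀)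
  refine ⟨ρ - infDist y₀ K, sub_pos.2 hy₀K, fun K' hK' y hy => ?_⟩
  rw [mem_ball, NonemptyCompacts.dist_eq, hausdorffDist_comm] at hK'
  rw [mem_thickening_iff_infDist_lt K'.nonempty]
  have hfin : hausdorffEDist (K : Set α) K' ≠ ⊤ := hausdorffEDist_ne_top_of_nonempty_of_bounded
    K.nonempty K'.nonempty K.isCompact.isBounded K'.isCompact.isBounded
  have h₁ := infDist_le_infDist_add_hausdorffDist (x := y) hfin
  have h₂ : infDist y K ≤ infDist y₀ K := hmax hy
  linarith

lemma isOpen_setOf_hasDenseInterval (ε : ℝ) :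
    IsOpen {K : NonemptyCompacts ℝ | HasDenseInterval ε K} := by
  simp only [HasDenseInterval, ofPred_exists, ofPred_and]
  exact isOpen_iUnion fun p => isOpen_iUnion fun q => isOpen_iUnion fun ρ =>
    isOpen_const.inter <| isOpen_const.inter <| isOpen_const.inter <|
      isOpen_setOf_subset_thickening isCompact_Icc ρ

lemma hasDenseInterval_of_Icc_subset {ε : ℝ} (hε : 0 < ε) {K : Set ℝ} {p q : ℝ} (hp : 0 ≤ p)
    (hpq : p < q) (h : Icc p q ⊆ K) : HasDenseInterval ε K := by
  have hs : 0 < q - p := sub_pos.2 hpq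
  set ρ := min ((q - p) / 4) (ε * (q - p) ^ 2 / 8)
  have hρ₁ : ρ ≤ (q - p) / 4 := min_le_left _ _
  have hρ₂ : ρ ≤ ε * (q - p) ^ 2 / 8 := min_le_right _ _
  have hρ : 0 < ρ := by positivity
  refine ⟨p, q, ρ, hρ, by linarith, ?_, h.trans (self_subset_thickening hρ K)⟩
  have : (q - p) / 2 * ((q - p) / 2) ≤ (q - ρ) * (q - p - 2 * ρ) :=
    mul_le_mul (by linarith) (by linarith) (by linarith) (by linarith)
  nlinarith

lemma dense_setOf_hasDenseInterval {ε : ℝ} (hε : 0 < ε) :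
    Dense {K : KIcc | HasDenseInterval ε K.1} := by
  have hind : IsInducing (Subtype.val : KIcc → NonemptyCompacts ℝ) := IsInducing.subtypeVal
  refine hind.dense_iff.2 fun K => ?_
  rw [Metric.mem_closure_iff]
  intro r hr
  obtain ⟨k, hk⟩ := K.1.nonempty
  obtain ⟨hk₀, hk₁⟩ := K.2 hk
  set s := min (r / 2) 1
  have hs₀ : 0 < s := lt_min (by linarith) one_pos
  have hs₁ : s ≤ 1 := min_le_right _ _
  set p := (1 - s) * k
  have hp : 0 ≤ p := mul_nonneg (by linarith) hk₀
  have hkI : k ∈ Icc p (p + s) := ⟨by nlinarith, by nlinarith⟩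
  let I : NonemptyCompacts ℝ := ⟨⟨Icc p (p + s), isCompact_Icc⟩, nonempty_Icc.2 (by linarith)⟩
  let K' : KIcc := ⟨K.1 ⊔ I, union_subset K.2 (Icc_subset_Icc hp (by nlinarith))⟩
  refine ⟨K'.1, ⟨K', hasDenseInterval_of_Icc_subset hε hp (by linarith) subset_union_right, rfl⟩,
    ?_⟩
  rw [NonemptyCompacts.dist_eq]
  refine (hausdorffDist_le_of_mem_dist hs₀.le (fun x hx => ⟨x, Or.inl hx, by simp [hs₀.le]⟩)
    ?_).trans_lt (by linarith [min_le_left (r / 2) 1])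
  rintro x (hx | hx)
  · exact ⟨x, hx, by simp [hs₀.le]⟩
  · refine ⟨k, hk, ?_⟩
    rw [Real.dist_eq, abs_le]
    exact ⟨by linarith [hx.1, hkI.2], by linarith [hx.2, hkI.1]⟩

lemma isCompact_sum_smul_pow {R : Type*} [Ring R] [TopologicalSpace R] [IsTopologicalRing R]
    {K : Set R} (hK : IsCompact K) (a : ℕ → R) (n : ℕ) :
    IsCompact (∑ i ∈ Finset.range n, a i • K ^ i) := by
  have hpow : ∀ i, IsCompact (K ^ i) := by
    intro i
    induction i with
    | zero => simp
    | succ i ih => simpa [pow_succ] using ih.mul hK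
  induction n with
  | zero => simp
  | succ n ih => simpa [Finset.sum_range_succ] using ih.add ((hpow n).smul (a n))

lemma interior_nonempty_of_tendsto_hausdorffDist {a : ℕ → ℝ} (hsum : Summable fun i => |a i|)
    {ε : ℝ} (hε : 0 < ε) {M : ℕ} (hgrow : ∀ n ≥ M, 0 < |a n| ∧ ε * |a n| ≤ |a (n + 1)|) {K : Set ℝ}
    (hK : K ⊆ Icc 0 1) (hKc : IsCompact K) (hKd : HasDenseInterval ε K) {F : Set ℝ}
    (hFc : IsCompact F) (hFne : F.Nonempty)
    (hlim : Tendsto (fun n => hausdorffDist (∑ i ∈ Finset.range n, a i • K ^ i) F) atTop (𝓝 0)) :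
    (interior F).Nonempty := by
  obtain ⟨p, q, ρ, hρ, hpq, hnum, hIcc⟩ := hKd
  obtain ⟨p', hp', q', hq', hp'p, hqq', hIcc'⟩ :=
    exists_mem_Icc_subset_thickening (by linarith) hIcc
  have hnum' : 2 * ρ ≤ ε * q' * (q' - p') := by
    have : 0 < q - ρ := by nlinarith [mul_pos hε (show 0 < q - p - 2 * ρ by linarith)]
    have : (q - ρ) * (q - p - 2 * ρ) ≤ q' * (q' - p') :=
      mul_le_mul (by linarith) (by linarith) (by linarith) (by linarith [(hK hq').1])
    nlinarith
  obtain ⟨lo, hi, hlt, hsub⟩ := exists_Icc_subset_seriesSums_smul_pow hsum hgrow hK hp' hq'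
    (by linarith) (fun y hy => (mem_thickening_iff.1 (hIcc' hy)).imp fun _ ⟨hk, h⟩ => ⟨hk, h.le⟩)
    hnum'
  have hsums : seriesSums (fun i => a i • K ^ i) ⊆ F := by
    refine seriesSums_subset_of_tendsto_hausdorffDist hFc.isClosed (fun n => ?_) hlim
    refine hausdorffEDist_ne_top_of_nonempty_of_bounded ⟨_, Set.finsetSum_mem_finsetSum _ _
      (fun i => a i * q' ^ i) fun i _ => smul_mem_smul_set (pow_mem_pow hq')⟩ hFne
      (isCompact_sum_smul_pow hKc a n).isBounded hFc.isBounded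
  exact (nonempty_Ioo.2 hlt).mono
    (interior_maximal (Ioo_subset_Icc_self.trans (hsub.trans hsums)) isOpen_Ioo)

theorem meager_empty_interior (a : ℕ → ℝ) (hsum : Summable (fun i => |a i|))
    (ε : ℝ) (hε : 0 < ε) (hratio : ∀ᶠ i in Filter.atTop, ε < |a (i + 1)| / |a i|) :
    IsMeagre {K : KIcc |
      ∃ F : Set ℝ, IsCompact F ∧ F.Nonempty ∧
        Filter.Tendsto
          (fun n => Metric.hausdorffDist
            (∑ i ∈ Finset.range n, a i • ((K.1 : Set ℝ) ^ i)) F)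
          Filter.atTop (nhds 0) ∧
        interior F = ∅} := by
  obtain ⟨M, hgrow⟩ := eventually_atTop.1
    (hratio.mono fun _ h => abs_pos_and_mul_abs_le_of_lt_div hε h)
  have hopen : IsOpen {K : KIcc | HasDenseInterval ε K.1} :=
    (isOpen_setOf_hasDenseInterval ε).preimage continuous_subtype_val
  refine mem_of_superset (residual_of_dense_open hopen (dense_setOf_hasDenseInterval hε)) ?_
  rintro K hK ⟨F, hFc, hFne, hlim, hF⟩
  exact (interior_nonempty_of_tendsto_hausdorffDist hsum hε hgrow K.2 K.1.isCompact hK hFc hFne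
    hlim).ne_empty hF
end
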